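/- (Correctness of normalization rule NF4.) Let D̂ and B be ALC concepts, r a role name, and A a concept name occurring neither in D̂ nor in B. (i) Every crisp interpretation J satisfying both D̂ ⊑ A and ∃r.A ⊑ B also satisfies ∃r.D̂ ⊑ B. (ii) For every crisp interpretation I satisfying ∃r.D̂ ⊑ B there exists a crisp interpretation J with the same domain, interpreting every concept name other than A and every role name the same as I, that satisfies both D̂ ⊑ A and ∃r.A ⊑ B. -/
import Mathlib


/-- ALC concepts over concept names `NC` and role names `NR`. -/
inductive ALCConcept (NC NR : Type) : Type
  | top : ALCConcept NC NR
  | bot : ALCConcept NC NR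
  | atom (A : NC) : ALCConcept NC NR
  | neg (C : ALCConcept NC NR) : ALCConcept NC NR
  | conj (C D : ALCConcept NC NR) : ALCConcept NC NR
  | disj (C D : ALCConcept NC NR) : ALCConcept NC NR
  | ex (r : NR) (C : ALCConcept NC NR) : ALCConcept NC NR
  | all (r : NR) (C : ALCConcept NC NR) : ALCConcept NC NR

namespace ALCConcept

/-- The set of concept names occurring in a concept. -/
def conceptNames {NC NR : Type} : ALCConcept NC NR → Set NC
  | top => ∅
  | bot => ∅
  | atom A => {A}
  | neg C => C.conceptNames
  | conj C D => C.conceptNames ∪ D.conceptNames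
  | disj C D => C.conceptNames ∪ D.conceptNames
  | ex _ C => C.conceptNames
  | all _ C => C.conceptNames

/-- The set of role names occurring in a concept. -/
def roleNames {NC NR : Type} : ALCConcept NC NR → Set NR
  | top => ∅
  | bot => ∅
  | atom _ => ∅
  | neg C => C.roleNames
  | conj C D => C.roleNames ∪ D.roleNames
  | disj C D => C.roleNames ∪ D.roleNames
  | ex r C => insert r C.roleNames
  | all r C => insert r C.roleNames

end ALCConcept

/-- A crisp interpretation with domain `Δ`. -/
structure Interp (NC NR Δ : Type) : Type where
  atom : NC → Set Δ
  role : NR → Set (Δ × Δ)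

/-- Extension of a crisp interpretation to all ALC concepts. -/
def Interp.eval {NC NR Δ : Type} (I : Interp NC NR Δ) : ALCConcept NC NR → Set Δ
  | .top => Set.univ
  | .bot => ∅
  | .atom A => I.atom A
  | .neg C => (I.eval C)ᶜ
  | .conj C D => I.eval C ∩ I.eval D
  | .disj C D => I.eval C ∪ I.eval D
  | .ex r C => {a | ∃ b, (a, b) ∈ I.role r ∧ b ∈ I.eval C}
  | .all r C => {a | ∀ b, (a, b) ∈ I.role r → b ∈ I.eval C}

/-- The concept inclusion `C ⊑ D` is true in (satisfied by) `I`. -/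
def Interp.satInclusion {NC NR Δ : Type} (I : Interp NC NR Δ)
    (C D : ALCConcept NC NR) : Prop :=
  I.eval C ⊆ I.eval D


lemma eval_congr {NC NR Δ : Type} (I J : Interp NC NR Δ)
    (C : ALCConcept NC NR)
    (hA : ∀ A ∈ C.conceptNames, J.atom A = I.atom A)
    (hR : ∀ s : NR, J.role s = I.role s) :
    J.eval C = I.eval C := by
  induction C with
  | top => rfl
  | bot => rfl
  | atom A => exact hA A rfl
  | neg C ih => simp only [Interp.eval, ih hA]
  | conj C D ihC ihD =>
      simp only [Interp.eval,
        ihC (fun a ha => hA a (Or.inl ha)), ihD (fun a ha => hA a (Or.inr ha))]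
  | disj C D ihC ihD =>
      simp only [Interp.eval,
        ihC (fun a ha => hA a (Or.inl ha)), ihD (fun a ha => hA a (Or.inr ha))]
  | ex s C ih => simp only [Interp.eval, ih hA, hR s]
  | all s C ih => simp only [Interp.eval, ih hA, hR s]

/-- correctness of normalization rule NF4,
`∃r.D̂ ⊑ B  ⇒  D̂ ⊑ A, ∃r.A ⊑ B` with `A` fresh. -/
theorem nf4_correct {NC NR Δ : Type} [Nonempty Δ]
    (Dh B : ALCConcept NC NR) (r : NR) (A : NC)
    (hD : A ∉ Dh.conceptNames) (hB : A ∉ B.conceptNames) :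
    (∀ J : Interp NC NR Δ,
        J.satInclusion Dh (.atom A) → J.satInclusion (.ex r (.atom A)) B →
          J.satInclusion (.ex r Dh) B) ∧
    (∀ I : Interp NC NR Δ, I.satInclusion (.ex r Dh) B →
        ∃ J : Interp NC NR Δ,
          (∀ B' : NC, B' ≠ A → J.atom B' = I.atom B') ∧
          (∀ s : NR, J.role s = I.role s) ∧
          J.satInclusion Dh (.atom A) ∧ J.satInclusion (.ex r (.atom A)) B) := by
  constructor
  · intro J h1 h2 a ha
    obtain ⟨b, hb, hbD⟩ := ha
    exact h2 ⟨b, hb, h1 hbD⟩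
  · intro I hI
    classical
    refine ⟨⟨fun B' => if B' = A then I.eval Dh else I.atom B', I.role⟩,
      fun B' hB' => by simp [hB'], fun s => rfl, ?_, ?_⟩
    · have : Interp.eval ⟨fun B' => if B' = A then I.eval Dh else I.atom B', I.role⟩ Dh
          = I.eval Dh := by
        apply eval_congr
        · intro a ha
          have : a ≠ A := fun h => hD (h ▸ ha)
          simp [this]
        · intro s; rfl
      intro x hx
      rw [this] at hx
      show x ∈ _
      simp [Interp.eval, hx]
    · intro x hx
      obtain ⟨b, hb, hbA⟩ := hx
      have hbD : b ∈ I.eval Dh := by simpa [Interp.eval] using hbA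
      have hBe : Interp.eval ⟨fun B' => if B' = A then I.eval Dh else I.atom B', I.role⟩ B
          = I.eval B := by
        apply eval_congr
        · intro a ha
          have : a ≠ A := fun h => hB (h ▸ ha)
          simp [this]
        · intro s; rfl
      rw [hBe]
      exact hI ⟨b, hb, hbD⟩
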